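/- arXiv:2310.10580 — 2 statements merged into one kernel-verified Lean document; each statement's English description precedes it below -/
import Mathlib

section
/- Let E be a connected directed graph, A = KE its path algebra over a field K, and T a centralizer of A (i.e., a K-linear map T: A → A with T(xy) = T(x)y = xT(y) for all x, y ∈ A). If there exists a vertex u ∈ E^0 and a scalar k ∈ K with T(u) = ku, then T = k·Id on A. -/
/-- A directed graph: vertices, edges, source and range maps. -/
structure DGraph : Type 1 where
  V : Type
  Edge : Type
  s : Edge → V
  r : Edge → V

namespace DGraph

/-- A list of edges is composable if consecutive edges match up. -/
def IsComposable (G : DGraph) (l : List G.Edge) : Prop :=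
  l.Chain' (fun e f => G.r e = G.s f)

/-- A path in `G`: either a trivial path at a vertex, or a nonempty composable list of edges. -/
def GPath (G : DGraph) : Type :=
  G.V ⊕ {l : List G.Edge // l ≠ [] ∧ G.IsComposable l}

namespace GPath

variable {G : DGraph}

/-- The source of a path. -/
def src : GPath G → G.V
  | Sum.inl v => v
  | Sum.inr l => G.s (l.1.head l.2.1)

/-- The range of a path. -/
def rng : GPath G → G.V
  | Sum.inl v => v
  | Sum.inr l => G.r (l.1.getLast l.2.1)

/-- The length of a path. -/
def length : GPath G → ℕ
  | Sum.inl _ => 0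
  | Sum.inr l => l.1.length

/-- The trivial path at a vertex. -/
def ofVertex (v : G.V) : GPath G := Sum.inl v

/-- The length-one path given by an edge. -/
def ofEdge (e : G.Edge) : GPath G :=
  Sum.inr ⟨[e], ⟨by simp, List.isChain_singleton _⟩⟩

/-- Concatenation of composable paths. -/
def comp : (p q : GPath G) → p.rng = q.src → GPath G
  | Sum.inl _, q, _ => q
  | Sum.inr l, Sum.inl _, _ => Sum.inr l
  | Sum.inr l, Sum.inr m, h => Sum.inr ⟨l.1 ++ m.1, by
      refine ⟨by simp [l.2.1], l.2.2.append m.2.2 ?_⟩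
      intro x hx y hy
      rw [List.getLast?_eq_some_getLast l.2.1] at hx
      rw [List.head?_eq_head m.2.1] at hy
      cases hx
      cases hy
      exact h⟩

end GPath

end DGraph

open DGraph

/-- A realization of the path algebra of the graph `G` over the field `K`:
a `K`-algebra with a basis indexed by the paths of `G`, multiplying by concatenation. -/
structure PathAlgebraOn (K : Type) [Field K] (G : DGraph) (A : Type)
    [NonUnitalRing A] [Module K A] where
  basis : Module.Basis (GPath G) K A
  mul_comp : ∀ (p q : GPath G) (h : p.rng = q.src),
      basis p * basis q = basis (p.comp q h)
  mul_ncomp : ∀ p q : GPath G, p.rng ≠ q.src → basis p * basis q = 0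

/-- Adjacency in the underlying undirected graph. -/
def DGraph.Adj (G : DGraph) (u v : G.V) : Prop :=
  ∃ e : G.Edge, (G.s e = u ∧ G.r e = v) ∨ (G.s e = v ∧ G.r e = u)

/-- A graph is connected if its underlying undirected graph is connected. -/
def DGraph.Connected (G : DGraph) : Prop :=
  ∀ u v : G.V, Relation.ReflTransGen G.Adj u v

/-!
Replacing `T` by the centroid map `S = T - k • id`, it suffices to show that a centroid map
vanishing on one vertex vanishes on every path. If `S v = 0` and `e` is an edge out of `v`, then
`S e = S v * e = 0`, so `x = S (r e)` satisfies `r e * x = x` and `e * x = S e = 0`. Since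
concatenation with `e` is injective on paths, left multiplication by `e` is injective on
`r e * A`, whence `x = 0`; dually for edges into `v`. Connectivity spreads this to all vertices,
and then `S p = S (s p) * p = 0` for every path `p`.
-/

namespace DGraph.GPath

variable {G : DGraph}

@[simp]
theorem comp_ofVertex (p : GPath G) (v : G.V) (h : p.rng = v) :
    p.comp (ofVertex v) h = p := by
  rcases p with w | l
  · exact congrArg Sum.inl h.symm
  · rfl

theorem comp_right_injective (p : GPath G) :
    Function.Injective fun q : {q : GPath G // p.rng = q.src} ↦ p.comp q.1 q.2 := by
  rintro ⟨q₁, h₁⟩ ⟨q₂, h₂⟩ heq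
  rcases p with v | ⟨l, hl⟩
  · exact Subtype.ext heq
  refine Subtype.ext ?_
  rcases q₁ with w₁ | ⟨m₁, hm₁⟩ <;> rcases q₂ with w₂ | ⟨m₂, hm₂⟩ <;>
    have hlist := congrArg Subtype.val (Sum.inr_injective heq) <;> dsimp only at hlist
  · exact congrArg Sum.inl (h₁.symm.trans h₂)
  · simpa [hm₂.1] using congrArg List.length hlist
  · simpa [hm₁.1] using congrArg List.length hlist
  · exact congrArg Sum.inr (Subtype.ext (List.append_cancel_left hlist))

theorem comp_left_injective (q : GPath G) :
    Function.Injective fun p : {p : GPath G // p.rng = q.src} ↦ p.1.comp q p.2 := by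
  rintro ⟨p₁, h₁⟩ ⟨p₂, h₂⟩ heq
  refine Subtype.ext ?_
  rcases q with v | ⟨m, hm⟩
  · exact (comp_ofVertex p₁ v h₁).symm.trans (heq.trans (comp_ofVertex p₂ v h₂))
  rcases p₁ with w₁ | ⟨l₁, hl₁⟩ <;> rcases p₂ with w₂ | ⟨l₂, hl₂⟩ <;>
    have hlist := congrArg Subtype.val (Sum.inr_injective heq) <;> dsimp only at hlist
  · exact congrArg Sum.inl (h₁.trans h₂.symm)
  · simpa [hl₂.1] using congrArg List.length hlist
  · simpa [hl₁.1] using congrArg List.length hlist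
  · exact congrArg Sum.inr (Subtype.ext (List.append_cancel_right hlist))

end DGraph.GPath

theorem Module.Basis.ker_le_ker_of_injective {ι κ R M N : Type*} [CommSemiring R]
    [AddCommMonoid M] [Module R M] [AddCommMonoid N] [Module R N]
    (b : Module.Basis ι R M) (c : Module.Basis κ R N) {P : ι → Prop}
    (g : {i // P i} → κ) (hg : Function.Injective g) (φ : M →ₗ[R] N) (ψ : M →ₗ[R] M)
    (hφ : ∀ i (h : P i), φ (b i) = c (g ⟨i, h⟩)) (hφ' : ∀ i, ¬P i → φ (b i) = 0)
    (hψ : ∀ i, P i → ψ (b i) = b i) (hψ' : ∀ i, ¬P i → ψ (b i) = 0) :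
    LinearMap.ker φ ≤ LinearMap.ker ψ := by
  let retraction : N →ₗ[R] M :=
    c.constr R fun j ↦ (Function.partialInv g j).elim 0 fun i ↦ b i
  have hretraction : retraction ∘ₗ φ = ψ := b.ext fun i ↦ by
    by_cases h : P i
    · simp [retraction, hφ i h, hψ i h, Function.partialInv_left hg]
    · simp [hφ' i h, hψ' i h]
  intro x hx
  rw [LinearMap.mem_ker, ← hretraction, LinearMap.comp_apply, LinearMap.mem_ker.mp hx, map_zero]

namespace PathAlgebraOn

open DGraph.GPath

variable {K : Type} [Field K] {G : DGraph} {A : Type} [NonUnitalRing A] [Module K A]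
  (PA : PathAlgebraOn K G A)

theorem vertex_mul (p : GPath G) : PA.basis (ofVertex p.src) * PA.basis p = PA.basis p :=
  PA.mul_comp _ _ rfl

theorem vertex_mul_self (v : G.V) :
    PA.basis (ofVertex v) * PA.basis (ofVertex v) = PA.basis (ofVertex v) :=
  PA.mul_comp _ _ rfl

theorem mul_vertex (p : GPath G) : PA.basis p * PA.basis (ofVertex p.rng) = PA.basis p :=
  (PA.mul_comp _ _ rfl).trans (congrArg PA.basis (comp_ofVertex _ _ _))

theorem eq_zero_of_basis_mul_eq_zero [SMulCommClass K A A] (p : GPath G) {x : A}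
    (hx : PA.basis (ofVertex p.rng) * x = x) (h : PA.basis p * x = 0) : x = 0 := by
  have hker := PA.basis.ker_le_ker_of_injective PA.basis _ p.comp_right_injective
    (LinearMap.mulLeft K (PA.basis p)) (LinearMap.mulLeft K (PA.basis (ofVertex p.rng)))
    (PA.mul_comp p) (PA.mul_ncomp p) (PA.mul_comp (ofVertex p.rng))
    (PA.mul_ncomp (ofVertex p.rng)) h
  rwa [LinearMap.mem_ker, LinearMap.mulLeft_apply, hx] at hker

theorem eq_zero_of_mul_basis_eq_zero [IsScalarTower K A A] (q : GPath G) {x : A}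
    (hx : x * PA.basis (ofVertex q.src) = x) (h : x * PA.basis q = 0) : x = 0 := by
  have hker := PA.basis.ker_le_ker_of_injective PA.basis _ q.comp_left_injective
    (LinearMap.mulRight K (PA.basis q)) (LinearMap.mulRight K (PA.basis (ofVertex q.src)))
    (fun p ↦ PA.mul_comp p q) (fun p ↦ PA.mul_ncomp p q)
    (fun p h ↦ (PA.mul_comp p (ofVertex q.src) h).trans (congrArg PA.basis (comp_ofVertex _ _ _)))
    (fun p ↦ PA.mul_ncomp p (ofVertex q.src)) h
  rwa [LinearMap.mem_ker, LinearMap.mulRight_apply, hx] at hker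

section Centroid

variable (S : CentroidHom A)

theorem map_basis_rng_eq_zero [SMulCommClass K A A] (p : GPath G)
    (h : S (PA.basis (ofVertex p.src)) = 0) :
    S (PA.basis (ofVertex p.rng)) = 0 := by
  have hp : S (PA.basis p) = 0 := by rw [← PA.vertex_mul p, map_mul_right, h, zero_mul]
  refine PA.eq_zero_of_basis_mul_eq_zero p ?_ ?_
  · rw [← map_mul_left, PA.vertex_mul_self]
  · rw [← map_mul_left, PA.mul_vertex, hp]

theorem map_basis_src_eq_zero [IsScalarTower K A A] (p : GPath G)
    (h : S (PA.basis (ofVertex p.rng)) = 0) :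
    S (PA.basis (ofVertex p.src)) = 0 := by
  have hp : S (PA.basis p) = 0 := by rw [← PA.mul_vertex p, map_mul_left, h, mul_zero]
  refine PA.eq_zero_of_mul_basis_eq_zero p ?_ ?_
  · rw [← map_mul_right, PA.vertex_mul_self]
  · rw [← map_mul_right, PA.vertex_mul, hp]

theorem map_basis_eq_zero_of_connected [SMulCommClass K A A] [IsScalarTower K A A]
    (hconn : G.Connected) {u : G.V}
    (hu : S (PA.basis (ofVertex u)) = 0) (p : GPath G) : S (PA.basis p) = 0 := by
  have hvertex : ∀ v, S (PA.basis (ofVertex v)) = 0 := fun v ↦ by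
    induction hconn u v with
    | refl => exact hu
    | tail _ hadj ih =>
      obtain ⟨e, ⟨rfl, rfl⟩ | ⟨rfl, rfl⟩⟩ := hadj
      · exact PA.map_basis_rng_eq_zero S (ofEdge e) ih
      · exact PA.map_basis_src_eq_zero S (ofEdge e) ih
  rw [← PA.vertex_mul p, map_mul_right, hvertex, zero_mul]

end Centroid

end PathAlgebraOn

/-- a centralizer of the path algebra of a connected graph acting as `k•` on
one vertex is `k • Id` everywhere. -/
theorem stmt4 (K : Type) [Field K] (G : DGraph)
    (A : Type) [NonUnitalRing A] [Module K A] [SMulCommClass K A A] [IsScalarTower K A A]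
    (PA : PathAlgebraOn K G A) (hconn : G.Connected)
    (T : A →ₗ[K] A) (hT : ∀ x y : A, T (x * y) = T x * y ∧ T (x * y) = x * T y)
    (u : G.V) (k : K)
    (hu : T (PA.basis (GPath.ofVertex u)) = k • PA.basis (GPath.ofVertex u)) :
    ∀ a : A, T a = k • a := by
  let centroid : CentroidHom A :=
    { T.toAddMonoidHom with
      map_mul_left' := fun x y ↦ (hT x y).2
      map_mul_right' := fun x y ↦ (hT x y).1 }
  have hbasis := PA.map_basis_eq_zero_of_connected (centroid - k • 1) hconn
    (u := u) (sub_eq_zero.mpr hu)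
  have hT_eq : T = k • LinearMap.id := PA.basis.ext fun p ↦ sub_eq_zero.mp (hbasis p)
  exact LinearMap.congr_fun hT_eq
end

section
/- Let E be a directed graph and A = KE its path algebra over a field K. Then A is prime if and only if E is strongly connected, i.e., for every pair of vertices u, v ∈ E^0 there exists a path λ with s(λ) = u and r(λ) = v. -/
open DGraph

namespace DGraph

def IsStronglyConnected (G : DGraph) : Prop :=
  ∀ u v : G.V, ∃ p : GPath G, p.src = u ∧ p.rng = v

namespace GPath

variable {G : DGraph}

def edges : GPath G → List G.Edge
  | Sum.inl _ => []
  | Sum.inr l => l.1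

theorem length_eq_length_edges (p : GPath G) : p.length = p.edges.length := by
  cases p <;> rfl

theorem edges_comp (p q : GPath G) (h : p.rng = q.src) :
    (p.comp q h).edges = p.edges ++ q.edges := by
  cases p <;> cases q <;> simp [comp, edges]

theorem length_comp (p q : GPath G) (h : p.rng = q.src) :
    (p.comp q h).length = p.length + q.length := by
  simp only [length_eq_length_edges, edges_comp, List.length_append]

theorem src_comp (p q : GPath G) (h : p.rng = q.src) : (p.comp q h).src = p.src := by
  rcases p with u | l
  · exact h.symm
  rcases q with v | m
  · rfl
  exact congrArg G.s (List.head_append_of_ne_nil l.2.1)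

theorem rng_comp (p q : GPath G) (h : p.rng = q.src) : (p.comp q h).rng = q.rng := by
  rcases p with u | l
  · rfl
  rcases q with v | m
  · exact h
  exact congrArg G.r (List.getLast_append_of_ne_nil _ m.2.1)

theorem ofVertex_comp (v : G.V) (p : GPath G) (h : (ofVertex v).rng = p.src) :
    (ofVertex v).comp p h = p :=
  rfl

theorem ext_of_edges_eq {p q : GPath G} (hs : p.src = q.src) (he : p.edges = q.edges) :
    p = q := by
  rcases p with u | l <;> rcases q with v | m
  · exact congrArg Sum.inl hs
  · exact absurd he.symm m.2.1
  · exact absurd he l.2.1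
  · exact congrArg Sum.inr (Subtype.ext he)

theorem comp_inj_of_length_eq {p q p' q' : GPath G} (h : p.rng = q.src) (h' : p'.rng = q'.src)
    (hlen : p.length = p'.length) (heq : p.comp q h = p'.comp q' h') : p = p' ∧ q = q' := by
  have hedges := congrArg edges heq
  rw [edges_comp, edges_comp] at hedges
  rw [length_eq_length_edges, length_eq_length_edges] at hlen
  obtain ⟨hp, hq⟩ := List.append_inj hedges hlen
  have hp : p = p' := ext_of_edges_eq (by simpa only [src_comp] using congrArg src heq) hp
  subst hp
  exact ⟨rfl, ext_of_edges_eq (h.symm.trans h') hq⟩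

theorem eq_of_comp_comp_eq {p q p₀ q₀ m : GPath G} (hp : p.length ≤ p₀.length)
    (hq : q.length ≤ q₀.length) (h₁ : p.rng = m.src) (h₂ : (p.comp m h₁).rng = q.src)
    (h₁' : p₀.rng = m.src) (h₂' : (p₀.comp m h₁').rng = q₀.src)
    (heq : (p.comp m h₁).comp q h₂ = (p₀.comp m h₁').comp q₀ h₂') : p = p₀ ∧ q = q₀ := by
  have hlen := congrArg length heq
  simp only [length_comp] at hlen
  have hp' : p.length = p₀.length := by omega
  obtain ⟨hpm, hq'⟩ := comp_inj_of_length_eq h₂ h₂' (by simp only [length_comp, hp']) heq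
  exact ⟨(comp_inj_of_length_eq h₁ h₁' hp' hpm).1, hq'⟩

end GPath

end DGraph

def IsPrimeRing (A : Type*) [Mul A] [Zero A] : Prop :=
  ∀ a b : A, (∀ c : A, a * c * b = 0) → a = 0 ∨ b = 0

namespace PathAlgebraOn

open GPath

variable {K : Type} [Field K] {G : DGraph} {A : Type} [NonUnitalRing A] [Module K A]

theorem vertex_mul_mul_vertex_eq_zero [SMulCommClass K A A] [IsScalarTower K A A]
    (PA : PathAlgebraOn K G A) {u v : G.V}
    (huv : ¬∃ p : GPath G, p.src = u ∧ p.rng = v) (c : A) :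
    PA.basis (ofVertex u) * c * PA.basis (ofVertex v) = 0 := by
  have hzero : LinearMap.mulRight K (PA.basis (ofVertex v)) ∘ₗ
      LinearMap.mulLeft K (PA.basis (ofVertex u)) = 0 := PA.basis.ext fun p => by
    simp only [LinearMap.comp_apply, LinearMap.mulLeft_apply, LinearMap.mulRight_apply,
      LinearMap.zero_apply]
    by_cases hu : (ofVertex u).rng = p.src
    · rw [PA.mul_comp _ p hu, ofVertex_comp,
        PA.mul_ncomp p (ofVertex v) fun hv => huv ⟨p, hu.symm, hv⟩]
    · rw [PA.mul_ncomp _ p hu, zero_mul]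
  exact LinearMap.congr_fun hzero c

theorem isStronglyConnected_of_isPrimeRing [SMulCommClass K A A] [IsScalarTower K A A]
    (PA : PathAlgebraOn K G A) (hA : IsPrimeRing A) : G.IsStronglyConnected := by
  intro u v
  by_contra huv
  rcases hA _ _ (PA.vertex_mul_mul_vertex_eq_zero huv) with h | h <;>
    exact PA.basis.ne_zero _ h

open Classical in
theorem repr_basis_mul_basis_mul_basis (PA : PathAlgebraOn K G A) {p q p₀ q₀ m : GPath G}
    (hp : p.length ≤ p₀.length) (hq : q.length ≤ q₀.length) (h₁ : p₀.rng = m.src)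
    (h₂ : (p₀.comp m h₁).rng = q₀.src) :
    PA.basis.repr (PA.basis p * PA.basis m * PA.basis q) ((p₀.comp m h₁).comp q₀ h₂) =
      if p = p₀ ∧ q = q₀ then 1 else 0 := by
  by_cases hpm : p.rng = m.src
  · by_cases hpmq : (p.comp m hpm).rng = q.src
    · rw [PA.mul_comp _ _ hpm, PA.mul_comp _ _ hpmq, PA.basis.repr_self, Finsupp.single_apply]
      refine if_congr ⟨eq_of_comp_comp_eq hp hq hpm hpmq h₁ h₂, ?_⟩ rfl rfl
      rintro ⟨rfl, rfl⟩
      rfl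
    · rw [PA.mul_comp _ _ hpm, PA.mul_ncomp _ _ hpmq, map_zero, Finsupp.zero_apply, if_neg]
      rintro ⟨rfl, rfl⟩
      exact hpmq h₂
  · rw [PA.mul_ncomp _ _ hpm, zero_mul, map_zero, Finsupp.zero_apply, if_neg]
    rintro ⟨rfl, rfl⟩
    exact hpm h₁

theorem repr_mul_basis_mul [SMulCommClass K A A] [IsScalarTower K A A]
    (PA : PathAlgebraOn K G A) {a b : A} {p₀ q₀ m : GPath G}
    (hp₀ : p₀ ∈ (PA.basis.repr a).support)
    (hp₀_max : ∀ p ∈ (PA.basis.repr a).support, p.length ≤ p₀.length)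
    (hq₀ : q₀ ∈ (PA.basis.repr b).support)
    (hq₀_max : ∀ q ∈ (PA.basis.repr b).support, q.length ≤ q₀.length)
    (h₁ : p₀.rng = m.src) (h₂ : (p₀.comp m h₁).rng = q₀.src) :
    PA.basis.repr (a * PA.basis m * b) ((p₀.comp m h₁).comp q₀ h₂) =
      PA.basis.repr a p₀ * PA.basis.repr b q₀ := by
  classical
  have hexpand := LinearMap.sum_repr_mul_repr_mul PA.basis PA.basis
    (B := LinearMap.mul K A ∘ₗ LinearMap.mulRight K (PA.basis m)) a b
  simp only [LinearMap.comp_apply, LinearMap.mulRight_apply, LinearMap.mul_apply'] at hexpand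
  rw [← hexpand, Finsupp.sum, map_sum, Finsupp.finsetSum_apply,
    Finset.sum_eq_single_of_mem p₀ hp₀ fun p hp hne => ?_]
  · rw [Finsupp.sum, map_sum, Finsupp.finsetSum_apply,
      Finset.sum_eq_single_of_mem q₀ hq₀ fun q hq hne => ?_]
    · simp [repr_basis_mul_basis_mul_basis PA le_rfl le_rfl]
    · simp [repr_basis_mul_basis_mul_basis PA le_rfl (hq₀_max q hq), hne]
  · rw [Finsupp.sum, map_sum, Finsupp.finsetSum_apply]
    refine Finset.sum_eq_zero fun q hq => ?_
    simp [repr_basis_mul_basis_mul_basis PA (hp₀_max p hp) (hq₀_max q hq), hne]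

theorem exists_mem_support_forall_length_le (PA : PathAlgebraOn K G A) {a : A} (ha : a ≠ 0) :
    ∃ p ∈ (PA.basis.repr a).support, ∀ q ∈ (PA.basis.repr a).support, q.length ≤ p.length :=
  Finset.exists_max_image _ length
    (Finsupp.support_nonempty_iff.mpr ((map_ne_zero_iff _ PA.basis.repr.injective).mpr ha))

theorem isPrimeRing_of_isStronglyConnected [SMulCommClass K A A] [IsScalarTower K A A]
    (PA : PathAlgebraOn K G A) (hG : G.IsStronglyConnected) : IsPrimeRing A := by
  intro a b hab
  by_contra! hne
  obtain ⟨p₀, hp₀, hp₀_max⟩ := PA.exists_mem_support_forall_length_le hne.1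
  obtain ⟨q₀, hq₀, hq₀_max⟩ := PA.exists_mem_support_forall_length_le hne.2
  obtain ⟨m, hm_src, hm_rng⟩ := hG p₀.rng q₀.src
  have h₂ : (p₀.comp m hm_src.symm).rng = q₀.src := (rng_comp _ _ _).trans hm_rng
  have hcoeff := PA.repr_mul_basis_mul hp₀ hp₀_max hq₀ hq₀_max hm_src.symm h₂
  rw [hab, map_zero, Finsupp.zero_apply] at hcoeff
  exact mul_ne_zero (Finsupp.mem_support_iff.mp hp₀) (Finsupp.mem_support_iff.mp hq₀) hcoeff.symm

end PathAlgebraOn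

/-- `KE` is prime iff `E` is strongly connected. -/
theorem stmt15 (K : Type) [Field K] (G : DGraph)
    (A : Type) [NonUnitalRing A] [Module K A] [SMulCommClass K A A] [IsScalarTower K A A]
    (PA : PathAlgebraOn K G A) :
    (∀ a b : A, (∀ c : A, a * c * b = 0) → a = 0 ∨ b = 0) ↔
    (∀ u v : G.V, ∃ p : GPath G, p.src = u ∧ p.rng = v) :=
  ⟨PA.isStronglyConnected_of_isPrimeRing, PA.isPrimeRing_of_isStronglyConnected⟩
end
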